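/- Every totally isotropic subspace N of K^V (K = F², finite V) has a special eulerian chain: a chain a : V → K with a(v) ∈ {±(1,0), ±(0,1)} for all v, such that no nonzero f ∈ N satisfies ⟨f(x),a(x)⟩_K = 0 for all x ∈ V. -/
import Mathlib


variable {F : Type*} [Field F] {V : Type*} [Fintype V] [DecidableEq V]

/-- The symmetric bilinear form `b⁺((a,b),(c,d)) = ad + bc` on `K = F²`. -/
def bplus : F × F → F × F → F := fun x y => x.1 * y.2 + x.2 * y.1

/-- The skew-symmetric bilinear form `b⁻((a,b),(c,d)) = ad − bc` on `K = F²`. -/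
def bminus : F × F → F × F → F := fun x y => x.1 * y.2 - x.2 * y.1

lemma key_orth (β : F × F → F × F → F)
    (hβ : β = (bplus : F × F → F × F → F) ∨ β = (bminus : F × F → F × F → F))
    (c : F × F) (hc : c = (1, 0) ∨ c = (-1, 0) ∨ c = (0, 1) ∨ c = (0, -1))
    (u w : F × F) (hu : β u c = 0) (hw : β w c = 0) : β u w = 0 := by
  rcases hβ with rfl | rfl <;>
    rcases hc with rfl | rfl | rfl | rfl <;>
      simp [bplus, bminus] at hu hw ⊢ <;>
        simp [hu, hw]

lemma aux_chain (β : F × F → F × F → F)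
    (hβ : β = (bplus : F × F → F × F → F) ∨ β = (bminus : F × F → F × F → F))
    (s : Finset V) :
    ∀ N : Submodule F (V → F × F),
      (∀ u ∈ N, ∀ w ∈ N, ∑ x, β (u x) (w x) = 0) →
      (∀ f ∈ N, ∀ x, x ∉ s → f x = 0) →
      ∃ a : V → F × F,
        (∀ v, a v = (1, 0) ∨ a v = (-1, 0) ∨ a v = (0, 1) ∨ a v = (0, -1)) ∧
        ∀ f ∈ N, (∀ x ∈ s, β (f x) (a x) = 0) → f = 0 := by
  induction s using Finset.induction_on with
  | empty =>
      intro N _ hsupp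
      exact ⟨fun _ => (1, 0), fun _ => Or.inl rfl,
        fun f hf _ => funext fun x => hsupp f hf x (Finset.notMem_empty x)⟩
  | @insert v0 s' hvs ih =>
      intro N hiso hsupp
      set M : Submodule F (V → F × F) :=
        N ⊓ LinearMap.ker (LinearMap.proj v0 : (V → F × F) →ₗ[F] F × F) with hMdef
      have hM : ∀ g, g ∈ M ↔ g ∈ N ∧ g v0 = 0 := by
        intro g
        simp [hMdef, Submodule.mem_inf, LinearMap.mem_ker]
      obtain ⟨a', ha'good, ha'⟩ :=
        ih M (fun u hu w hw => hiso u ((hM u).mp hu).1 w ((hM w).mp hw).1)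
          (by
            intro f hf x hx
            rcases (hM f).mp hf with ⟨hfN, hfv0⟩
            by_cases hx0 : x = v0
            · rw [hx0]; exact hfv0
            · exact hsupp f hfN x (by simp [Finset.mem_insert, hx0, hx]))
      have hβ0 : ∀ w : F × F, β 0 w = 0 := by
        rcases hβ with rfl | rfl <;> intro w <;> simp [bplus, bminus]
      have hpair : ∀ g ∈ N, ∀ h ∈ N, (∀ x ∈ s', β (g x) (a' x) = 0) →
          (∀ x ∈ s', β (h x) (a' x) = 0) → β (g v0) (h v0) = 0 := by
        intro g hg h hh hgs hhs
        have h0 := hiso g hg h hh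
        rw [← Finset.sum_add_sum_compl (insert v0 s') (fun x => β (g x) (h x))] at h0
        rw [Finset.sum_insert hvs] at h0
        rw [Finset.sum_eq_zero
          (fun x hx => key_orth β hβ (a' x) (ha'good x) _ _ (hgs x hx) (hhs x hx))] at h0
        rw [Finset.sum_eq_zero
          (fun x hx => by rw [hsupp g hg x (Finset.mem_compl.mp hx)]; exact hβ0 _)] at h0
        simpa using h0
      -- second coordinate / first coordinate extraction
      have hco1 : ∀ u : F × F, β u (1, 0) = 0 → u.2 = 0 := by
        rcases hβ with rfl | rfl <;> intro u hu <;> simpa [bplus, bminus] using hu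
      have hco2 : ∀ u : F × F, β u (0, 1) = 0 → u.1 = 0 := by
        rcases hβ with rfl | rfl <;> intro u hu <;> simpa [bplus, bminus] using hu
      have hchoice : ∃ c0 : F × F, (c0 = (1, 0) ∨ c0 = (0, 1)) ∧
          ∀ g ∈ N, (∀ x ∈ s', β (g x) (a' x) = 0) → β (g v0) c0 = 0 → g v0 = 0 := by
        by_cases hc : ∀ g ∈ N, (∀ x ∈ s', β (g x) (a' x) = 0) →
            β (g v0) ((1 : F), (0 : F)) = 0 → g v0 = 0
        · exact ⟨(1, 0), Or.inl rfl, hc⟩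
        · push_neg at hc
          obtain ⟨g, hg, hgs, hgb, hgne⟩ := hc
          refine ⟨(0, 1), Or.inr rfl, ?_⟩
          intro h hh hhs hhb
          have hp := hpair g hg h hh hgs hhs
          have hg2 : (g v0).2 = 0 := hco1 _ hgb
          have hh1 : (h v0).1 = 0 := hco2 _ hhb
          have hp' : (g v0).1 * (h v0).2 = 0 := by
            rcases hβ with rfl | rfl <;>
              · simp only [bplus, bminus, hg2, hh1, mul_zero, zero_mul, add_zero,
                  sub_zero] at hp
                exact hp
          rcases mul_eq_zero.mp hp' with h1 | h2
          · exact absurd (Prod.ext h1 hg2) hgne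
          · exact Prod.ext hh1 h2
      obtain ⟨c0, hc0, hc0prop⟩ := hchoice
      refine ⟨Function.update a' v0 c0, ?_, ?_⟩
      · intro v
        by_cases hv : v = v0
        · subst hv
          rw [Function.update_self]
          rcases hc0 with rfl | rfl
          · exact Or.inl rfl
          · exact Or.inr (Or.inr (Or.inl rfl))
        · rw [Function.update_of_ne hv]; exact ha'good v
      · intro f hf hfa
        have hfs' : ∀ x ∈ s', β (f x) (a' x) = 0 := by
          intro x hx
          have hxne : x ≠ v0 := fun h => hvs (h ▸ hx)
          have := hfa x (Finset.mem_insert_of_mem hx)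
          rwa [Function.update_of_ne hxne] at this
        have hfv0 : f v0 = 0 := by
          apply hc0prop f hf hfs'
          have := hfa v0 (Finset.mem_insert_self v0 s')
          rwa [Function.update_self] at this
        exact ha' f ((hM f).mpr ⟨hf, hfv0⟩) hfs'

/-- Every totally isotropic subspace `N` of `K^V` (`K = F²`) has a special
eulerian chain: a chain `a` with `a(v) ∈ {±(1,0), ±(0,1)}` for all `v` such
that no nonzero `f ∈ N` is pointwise orthogonal to `a`. -/
theorem exists_special_eulerian (β : F × F → F × F → F)
    (hβ : β = (bplus : F × F → F × F → F) ∨ β = (bminus : F × F → F × F → F))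
    (N : Submodule F (V → F × F))
    (hiso : ∀ u ∈ N, ∀ w ∈ N, ∑ x, β (u x) (w x) = 0) :
    ∃ a : V → F × F,
      (∀ v, a v = (1, 0) ∨ a v = (-1, 0) ∨ a v = (0, 1) ∨ a v = (0, -1)) ∧
      ∀ f ∈ N, (∀ x, β (f x) (a x) = 0) → f = 0 := by
  obtain ⟨a, hgood, ha⟩ := aux_chain β hβ (Finset.univ : Finset V) N hiso
    (fun f _ x hx => absurd (Finset.mem_univ x) hx)
  exact ⟨a, hgood, fun f hf hfa => ha f hf fun x _ => hfa x⟩
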